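/- arXiv:2602.19378 — 2 statements merged into one kernel-verified Lean document; each statement's English description precedes it below -/
import Mathlib

section
/- (Proposition S2: completeness in X of the Gaussian linear outcome model with nonzero covariate slope.) Let σ > 0 and a, c ∈ ℝ with c ≠ 0 (in the paper, a = α₀ + α_t·t and c = α_x + α_{tx}t). Let μ be a finite Borel measure on ℝ (the observed-data law of X on the relevant event). If g : ℝ → ℝ is μ-integrable and ∫ g(x) · exp(−(y − a − c·x)² / (2σ²)) dμ(x) = 0 for Lebesgue-almost every y ∈ ℝ, then g = 0 μ-almost everywhere. -/
open MeasureTheory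

open Real Complex FourierTransform
open scoped FourierTransform

/-- A smooth compactly supported real function, promoted to a complex-valued Schwartz map. -/
noncomputable def toSchwartzC (φ : ℝ → ℝ) (hφ : ContDiff ℝ ((⊤ : ℕ∞) : WithTop ℕ∞) φ) (h2φ : HasCompactSupport φ) :
    SchwartzMap ℝ ℂ where
  toFun := fun x => (φ x : ℂ)
  smooth' := Complex.ofRealCLM.contDiff.comp hφ
  decay' := by
    intro k n
    have hψ : ContDiff ℝ ((⊤ : ℕ∞) : WithTop ℕ∞) (fun x => (φ x : ℂ)) := Complex.ofRealCLM.contDiff.comp hφ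
    have hcs : HasCompactSupport (fun x => (φ x : ℂ)) :=
      h2φ.comp_left (g := fun r : ℝ => (r : ℂ)) (by simp)
    have hit : HasCompactSupport (iteratedFDeriv ℝ n (fun x => (φ x : ℂ))) :=
      hcs.iteratedFDeriv n
    have hcont : Continuous fun x : ℝ => ‖x‖ ^ k * ‖iteratedFDeriv ℝ n (fun x => (φ x : ℂ)) x‖ :=
      ((continuous_norm.pow k)).mul (hψ.continuous_iteratedFDeriv (by exact_mod_cast le_top)).norm
    have hcs2 : HasCompactSupport
        fun x : ℝ => ‖x‖ ^ k * ‖iteratedFDeriv ℝ n (fun x => (φ x : ℂ)) x‖ :=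
      HasCompactSupport.mul_left hit.norm
    obtain ⟨C, hC⟩ := hcont.bounded_above_of_compact_support hcs2
    refine ⟨C, fun x => ?_⟩
    have := hC x
    rwa [Real.norm_of_nonneg (by positivity)] at this

lemma ae_zero_of_fourier (μ : Measure ℝ) [IsFiniteMeasure μ]
    (g : ℝ → ℝ) (hg : Integrable g μ)
    (hG : ∀ s : ℝ, ∫ x, (g x : ℂ) * Complex.exp (Complex.I * s * x) ∂μ = 0) :
    g =ᵐ[μ] 0 := by
  apply ae_eq_zero_of_integral_contDiff_smul_eq_zero (hg.locallyIntegrable)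
  intro φ hφ h2φ
  set ψ := toSchwartzC φ hφ h2φ with hψdef
  have hψcoe : ⇑ψ = fun x => (φ x : ℂ) := rfl
  have hψint : Integrable (⇑ψ) volume := ψ.integrable
  have h𝓕int : Integrable (𝓕 ⇑ψ) volume := by
    rw [← SchwartzMap.fourier_coe]
    exact (SchwartzMap.fourierTransformCLM ℂ ψ).integrable
  have hinv : ∀ x : ℝ, (φ x : ℂ) = ∫ t : ℝ, Complex.exp ((2 * π * (t * x) : ℝ) * Complex.I) * 𝓕 (⇑ψ) t := by
    intro x
    have := (ψ.continuous.fourierInv_fourier_eq hψint h𝓕int)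
    have hx : 𝓕⁻ (𝓕 ⇑ψ) x = (φ x : ℂ) := by rw [this]; rfl
    rw [← hx, Real.fourierInv_eq']
    simp [RCLike.inner_apply, conj_trivial, smul_eq_mul]
    congr 1; ext v; rw [mul_comm (x : ℂ)]
  set Fψ : SchwartzMap ℝ ℂ := SchwartzMap.fourierTransformCLM ℂ ψ with hFψ
  have hFψcoe : 𝓕 ⇑ψ = ⇑Fψ := rfl
  rw [hFψcoe] at hinv
  -- the double integrand
  have hgC : AEStronglyMeasurable (fun p : ℝ × ℝ => ((g p.1 : ℂ))) (μ.prod volume) :=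
    Complex.continuous_ofReal.comp_aestronglyMeasurable hg.1.comp_fst
  have hker : Continuous fun p : ℝ × ℝ =>
      Complex.exp ((2 * π * (p.2 * p.1) : ℝ) * Complex.I) * Fψ p.2 :=
    (Complex.continuous_exp.comp ((Complex.continuous_ofReal.comp
      (continuous_const.mul (continuous_snd.mul continuous_fst))).mul continuous_const)).mul
      (Fψ.continuous.comp continuous_snd)
  have hF : Integrable (fun p : ℝ × ℝ =>
      Complex.exp ((2 * π * (p.2 * p.1) : ℝ) * Complex.I) * Fψ p.2 * (g p.1 : ℂ))
      (μ.prod volume) := by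
    have hbound : Integrable (fun p : ℝ × ℝ => ‖g p.1‖ * ‖Fψ p.2‖) (μ.prod volume) :=
      hg.norm.mul_prod Fψ.integrable.norm
    refine hbound.mono' (hker.aestronglyMeasurable.mul hgC) ?_
    filter_upwards with p
    refine le_of_eq ?_
    simp only [norm_mul, Complex.norm_exp_ofReal_mul_I, one_mul, Complex.norm_real,
      norm_norm]
    ring
  have key : ∫ x, (φ x : ℂ) * (g x : ℂ) ∂μ = 0 := by
    have step1 : ∫ x, (φ x : ℂ) * (g x : ℂ) ∂μ
        = ∫ x, (∫ t, Complex.exp ((2 * π * (t * x) : ℝ) * Complex.I) * Fψ t * (g x : ℂ)) ∂μ := by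
      refine integral_congr_ae (ae_of_all _ fun x => ?_)
      show (φ x : ℂ) * (g x : ℂ)
          = ∫ t, Complex.exp ((2 * π * (t * x) : ℝ) * Complex.I) * Fψ t * (g x : ℂ)
      rw [hinv x]
      exact (integral_mul_const _ _).symm
    have step2 : ∫ x, (∫ t, Complex.exp ((2 * π * (t * x) : ℝ) * Complex.I) * Fψ t * (g x : ℂ)) ∂μ
        = ∫ t, (∫ x, Complex.exp ((2 * π * (t * x) : ℝ) * Complex.I) * Fψ t * (g x : ℂ) ∂μ) := by
      exact integral_integral_swap hF
    have step3 : ∫ t, (∫ x, Complex.exp ((2 * π * (t * x) : ℝ) * Complex.I) * Fψ t * (g x : ℂ) ∂μ)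
        = (0 : ℂ) := by
      have h0 : ∀ t : ℝ, ∫ x, Complex.exp ((2 * π * (t * x) : ℝ) * Complex.I) * Fψ t * (g x : ℂ) ∂μ
          = 0 := by
        intro t
        have heq : (fun x : ℝ => Complex.exp ((2 * π * (t * x) : ℝ) * Complex.I) * Fψ t * (g x : ℂ))
            = fun x : ℝ => Fψ t * ((g x : ℂ) * Complex.exp (Complex.I * ((2 * π * t : ℝ) : ℂ) * x)) := by
          funext x
          have : ((2 * π * (t * x) : ℝ) : ℂ) * Complex.I = Complex.I * ((2 * π * t : ℝ) : ℂ) * x := by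
            push_cast; ring
          rw [this]; ring
        rw [heq, integral_const_mul, hG (2 * π * t), mul_zero]
      simp only [h0, integral_zero]
    rw [step1, step2, step3]
  rw [show (fun x => (φ x : ℂ) * (g x : ℂ)) = fun x => ((φ x * g x : ℝ) : ℂ) by
    funext x; push_cast; ring] at key
  have hcast : ∫ x, ((φ x * g x : ℝ) : ℂ) ∂μ = ((∫ x, φ x * g x ∂μ : ℝ) : ℂ) :=
    integral_ofReal
  rw [hcast] at key
  have h0 : ∫ x, φ x * g x ∂μ = 0 := by exact_mod_cast key
  simpa [smul_eq_mul] using h0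


lemma fourier_vanish (σ a c : ℝ) (hσ : 0 < σ) (hc : c ≠ 0)
    (μ : Measure ℝ) [IsFiniteMeasure μ]
    (g : ℝ → ℝ) (hg : Integrable g μ)
    (h : ∀ᵐ y ∂(volume : Measure ℝ),
      ∫ x, g x * Real.exp (-(y - a - c * x) ^ 2 / (2 * σ ^ 2)) ∂μ = 0) :
    ∀ s : ℝ, ∫ x, (g x : ℂ) * Complex.exp (Complex.I * s * x) ∂μ = 0 := by
  intro s
  set τ : ℝ := s / c with hτ
  have hτc : τ * c = s := div_mul_cancel₀ s hc
  set b0 : ℝ := 1 / (2 * σ ^ 2) with hb0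
  have hb0pos : 0 < b0 := by positivity
  set b : ℂ := (b0 : ℂ) with hbdef
  have hbre : 0 < b.re := by simpa [b] using hb0pos
  -- the Gaussian integral constant
  set K : ℂ := ∫ u : ℝ, Complex.exp (Complex.I * (τ : ℂ) * (u : ℂ)) * Complex.exp (-b * (u : ℂ) ^ 2)
    with hKdef
  have hK : K = (π / b) ^ (1 / 2 : ℂ) * Complex.exp (-(τ : ℂ) ^ 2 / (4 * b)) :=
    fourierIntegral_gaussian hbre τ
  have hKne : K ≠ 0 := by
    rw [hK]
    apply mul_ne_zero
    · intro hzero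
      rw [Complex.cpow_eq_zero_iff] at hzero
      exact (div_ne_zero (Complex.ofReal_ne_zero.mpr Real.pi_ne_zero)
        (by simp only [hbdef, ne_eq, Complex.ofReal_eq_zero]; exact ne_of_gt hb0pos)) hzero.1
    · exact Complex.exp_ne_zero _
  -- the joint integrand
  set f : ℝ → ℝ → ℂ := fun x y => Complex.exp (Complex.I * (τ : ℂ) * (y : ℂ)) *
    ((g x : ℂ) * (Real.exp (-(y - a - c * x) ^ 2 / (2 * σ ^ 2)) : ℂ)) with hfdef
  -- pointwise norm
  have hnorm : ∀ x y : ℝ, ‖f x y‖ = ‖g x‖ * Real.exp (-(y - a - c * x) ^ 2 / (2 * σ ^ 2)) := by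
    intro x y
    simp only [hfdef, norm_mul, Complex.norm_real, norm_norm]
    rw [show Complex.I * (τ : ℂ) * (y : ℂ) = ((τ * y : ℝ) : ℂ) * Complex.I by push_cast; ring,
      Complex.norm_exp_ofReal_mul_I, one_mul, Real.norm_of_nonneg (Real.exp_nonneg _)]
  -- Gaussian in y is integrable for each x
  have hgauss : ∀ m : ℝ, Integrable (fun y : ℝ => Real.exp (-(y - m) ^ 2 / (2 * σ ^ 2))) volume := by
    intro m
    have : (fun y : ℝ => Real.exp (-(y - m) ^ 2 / (2 * σ ^ 2)))
        = fun y : ℝ => Real.exp (-b0 * (y - m) ^ 2) := by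
      funext y; congr 1; rw [hb0]; ring
    rw [this]
    exact (integrable_exp_neg_mul_sq hb0pos).comp_sub_right m
  have hK0 : ∀ m : ℝ, ∫ y : ℝ, Real.exp (-(y - m) ^ 2 / (2 * σ ^ 2))
      = ∫ u : ℝ, Real.exp (-u ^ 2 / (2 * σ ^ 2)) := by
    intro m
    rw [← integral_add_right_eq_self (fun y : ℝ => Real.exp (-(y - m) ^ 2 / (2 * σ ^ 2))) m]
    congr 1; funext u; simp [add_sub_cancel_right]
  -- integrability of the uncurried integrand
  have hfi : Integrable (Function.uncurry f) (μ.prod (volume : Measure ℝ)) := by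
    have hmeas : AEStronglyMeasurable (Function.uncurry f) (μ.prod (volume : Measure ℝ)) := by
      apply AEStronglyMeasurable.mul
      · exact (Complex.continuous_exp.comp ((continuous_const.mul
          (Complex.continuous_ofReal.comp continuous_snd)))).aestronglyMeasurable
      · apply AEStronglyMeasurable.mul
        · exact Complex.continuous_ofReal.comp_aestronglyMeasurable hg.1.comp_fst
        · refine (Complex.continuous_ofReal.comp ?_).aestronglyMeasurable
          exact Real.continuous_exp.comp (by fun_prop)
    rw [integrable_prod_iff hmeas]
    have hsub : ∀ x y : ℝ, y - a - c * x = y - (a + c * x) := by intro x y; ring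
    constructor
    · refine ae_of_all _ fun x => ?_
      have hcont : Continuous fun y => f x y := by
        apply Continuous.mul
        · exact Complex.continuous_exp.comp (continuous_const.mul Complex.continuous_ofReal)
        · exact continuous_const.mul (Complex.continuous_ofReal.comp
            (Real.continuous_exp.comp (by fun_prop)))
      have hb1 : Integrable (fun y : ℝ => ‖g x‖ * Real.exp (-(y - (a + c * x)) ^ 2 / (2 * σ ^ 2)))
          volume := (hgauss (a + c * x)).const_mul _
      refine hb1.mono' hcont.aestronglyMeasurable (ae_of_all _ fun y => ?_)
      rw [show Function.uncurry f (x, y) = f x y from rfl, hnorm x y, hsub x y]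
    · have heq : (fun x => ∫ y, ‖Function.uncurry f (x, y)‖)
          = fun x => (∫ u : ℝ, Real.exp (-u ^ 2 / (2 * σ ^ 2))) * ‖g x‖ := by
        funext x
        calc ∫ y, ‖Function.uncurry f (x, y)‖
            = ∫ y, ‖g x‖ * Real.exp (-(y - (a + c * x)) ^ 2 / (2 * σ ^ 2)) := by
              congr 1; funext y
              rw [show Function.uncurry f (x, y) = f x y from rfl, hnorm x y, hsub x y]
          _ = ‖g x‖ * ∫ y, Real.exp (-(y - (a + c * x)) ^ 2 / (2 * σ ^ 2)) :=
              integral_const_mul _ _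
          _ = (∫ u : ℝ, Real.exp (-u ^ 2 / (2 * σ ^ 2))) * ‖g x‖ := by
              rw [hK0 (a + c * x)]; ring
      rw [heq]
      exact hg.norm.const_mul _
  have swap := integral_integral_swap hfi
  -- the y-side vanishes by hypothesis
  have hRHS : ∫ y, (∫ x, f x y ∂μ) = 0 := by
    have hae : ∀ᵐ y ∂(volume : Measure ℝ), (∫ x, f x y ∂μ) = 0 := by
      filter_upwards [h] with y hy
      have h1 : (fun x => f x y) = fun x => Complex.exp (Complex.I * (τ : ℂ) * (y : ℂ)) *
          ((g x * Real.exp (-(y - a - c * x) ^ 2 / (2 * σ ^ 2)) : ℝ) : ℂ) := by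
        funext x; rw [hfdef]; push_cast; ring
      have hor : ∫ x, ((g x * Real.exp (-(y - a - c * x) ^ 2 / (2 * σ ^ 2)) : ℝ) : ℂ) ∂μ
          = ((∫ x, g x * Real.exp (-(y - a - c * x) ^ 2 / (2 * σ ^ 2)) ∂μ : ℝ) : ℂ) :=
        integral_ofReal
      rw [h1, integral_const_mul, hor, hy]
      simp
    exact integral_eq_zero_of_ae hae
  -- the x-side inner integral
  have hinner : ∀ x : ℝ, (∫ y, f x y)
      = (g x : ℂ) * Complex.exp (Complex.I * (τ : ℂ) * ((a + c * x : ℝ) : ℂ)) * K := by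
    intro x
    set m : ℝ := a + c * x with hm
    have h1 : (fun y => f x y) = fun y : ℝ => Complex.exp (Complex.I * (τ : ℂ) * (y : ℂ)) *
        ((g x : ℂ) * ((Real.exp (-(y - m) ^ 2 / (2 * σ ^ 2)) : ℝ) : ℂ)) := by
      funext y; rw [hfdef]; simp only; rw [show y - a - c * x = y - m by rw [hm]; ring]
    rw [h1, ← integral_add_right_eq_self (fun y : ℝ => Complex.exp (Complex.I * (τ : ℂ) * (y : ℂ)) *
        ((g x : ℂ) * (Real.exp (-(y - m) ^ 2 / (2 * σ ^ 2)) : ℂ))) m]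
    have h2 : (fun u : ℝ => Complex.exp (Complex.I * (τ : ℂ) * ((u + m : ℝ) : ℂ)) *
        ((g x : ℂ) * (Real.exp (-(u + m - m) ^ 2 / (2 * σ ^ 2)) : ℂ)))
        = fun u : ℝ => ((g x : ℂ) * Complex.exp (Complex.I * (τ : ℂ) * (m : ℂ))) *
          (Complex.exp (Complex.I * (τ : ℂ) * (u : ℂ)) * Complex.exp (-b * (u : ℂ) ^ 2)) := by
      funext u
      have e1 : u + m - m = u := by ring
      have e2 : ((Real.exp (-u ^ 2 / (2 * σ ^ 2)) : ℝ) : ℂ) = Complex.exp (-b * (u : ℂ) ^ 2) := by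
        rw [Complex.ofReal_exp]
        congr 1
        rw [hbdef, hb0]
        push_cast
        ring
      have e3 : Complex.I * (τ : ℂ) * ((u + m : ℝ) : ℂ)
          = Complex.I * (τ : ℂ) * (m : ℂ) + Complex.I * (τ : ℂ) * (u : ℂ) := by
        push_cast; ring
      rw [e1, e2, e3, Complex.exp_add]
      ring
    rw [h2, integral_const_mul, ← hKdef]
  -- assemble
  have hLHS : ∫ x, (∫ y, f x y) ∂μ
      = (∫ x, (g x : ℂ) * Complex.exp (Complex.I * (s : ℂ) * (x : ℂ)) ∂μ) *
        (Complex.exp (Complex.I * (τ : ℂ) * (a : ℂ)) * K) := by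
    calc ∫ x, (∫ y, f x y) ∂μ
        = ∫ x, (g x : ℂ) * Complex.exp (Complex.I * (τ : ℂ) * ((a + c * x : ℝ) : ℂ)) * K ∂μ := by
          refine integral_congr_ae (ae_of_all _ fun x => ?_)
          exact hinner x
      _ = ∫ x, ((g x : ℂ) * Complex.exp (Complex.I * (s : ℂ) * (x : ℂ))) *
            (Complex.exp (Complex.I * (τ : ℂ) * (a : ℂ)) * K) ∂μ := by
          refine integral_congr_ae (ae_of_all _ fun x => ?_)
          have e4 : Complex.I * (τ : ℂ) * ((a + c * x : ℝ) : ℂ)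
              = Complex.I * (τ : ℂ) * (a : ℂ) + Complex.I * (s : ℂ) * (x : ℂ) := by
            rw [← hτc]; push_cast; ring
          show (g x : ℂ) * Complex.exp (Complex.I * (τ : ℂ) * ((a + c * x : ℝ) : ℂ)) * K = _
          rw [e4, Complex.exp_add]
          ring
      _ = (∫ x, (g x : ℂ) * Complex.exp (Complex.I * (s : ℂ) * (x : ℂ)) ∂μ) *
            (Complex.exp (Complex.I * (τ : ℂ) * (a : ℂ)) * K) := integral_mul_const _ _
  have hzero : (∫ x, (g x : ℂ) * Complex.exp (Complex.I * (s : ℂ) * (x : ℂ)) ∂μ) *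
      (Complex.exp (Complex.I * (τ : ℂ) * (a : ℂ)) * K) = 0 := by
    rw [← hLHS, swap, hRHS]
  rcases mul_eq_zero.mp hzero with h' | h'
  · exact h'
  · exact absurd h' (mul_ne_zero (Complex.exp_ne_zero _) hKne)


/-- Proposition S2: completeness in `X` of the Gaussian linear outcome model with
nonzero covariate slope. If `σ > 0`, `c ≠ 0`, `μ` is a finite Borel measure on `ℝ`,
`g` is `μ`-integrable, and `∫ g(x) · exp(−(y − a − c·x)²/(2σ²)) dμ(x) = 0` for
Lebesgue-almost every `y`, then `g = 0` `μ`-almost everywhere. -/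
theorem stmt_15 (σ a c : ℝ) (hσ : 0 < σ) (hc : c ≠ 0)
    (μ : Measure ℝ) [IsFiniteMeasure μ]
    (g : ℝ → ℝ) (hg : Integrable g μ)
    (h : ∀ᵐ y ∂(volume : Measure ℝ),
      ∫ x, g x * Real.exp (-(y - a - c * x) ^ 2 / (2 * σ ^ 2)) ∂μ = 0) :
    g =ᵐ[μ] 0 := by
  exact ae_zero_of_fourier μ g hg (fourier_vanish σ a c hσ hc μ g hg h)
end

section
/- (Identification of the conditional mean potential outcome under strong ignorability.) Let (Ω, 𝓕, P) be a probability space, 𝒯 and 𝒳 finite sets, T : Ω → 𝒯 and X : Ω → 𝒳 random elements, and for each t ∈ 𝒯 let Y_t : Ω → ℝ be an integrable random variable (the potential outcome under treatment t). Define the observed outcome Y(ω) = Y_{T(ω)}(ω) (SUTVA/consistency). Assume strong ignorability: the family (Y_t)_{t∈𝒯} is jointly conditionally independent of T given X, i.e., for every x ∈ 𝒳 with P(X=x) > 0, every t₀ ∈ 𝒯 and every bounded measurable function f of the vector (Y_t)_{t∈𝒯}, E[f·1{T=t₀} | X=x] = E[f | X=x] · P(T=t₀ | X=x). Assume positivity: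 P(T=t | X=x) > 0 for all t ∈ 𝒯 and all x ∈ 𝒳 with P(X=x) > 0. Then for every t ∈ 𝒯 and every x ∈ 𝒳 with P(X=x) > 0, E[Y_t | X=x] = E[Y | T=t, X=x], and consequently the conditional average treatment effect τ_{t₁,t₀}(x) = E[Y_{t₁} − Y_{t₀} | X=x] equals E[Y | T=t₁, X=x] − E[Y | T=t₀, X=x]. -/
open MeasureTheory
open scoped Classical

noncomputable section

/-- Conditional expectation `E[Z | A] = E[Z · 1_A] / P(A)` given an event `A`. -/
def condExpE {Ω : Type*} [MeasurableSpace Ω] (P : Measure Ω) (Z : Ω → ℝ) (A : Set Ω) : ℝ :=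
  (∫ ω in A, Z ω ∂P) / (P A).toReal

/-- Conditional probability `P(B | A)` of events. -/
def condPrE {Ω : Type*} [MeasurableSpace Ω] (P : Measure Ω) (B A : Set Ω) : ℝ :=
  (P (B ∩ A)).toReal / (P A).toReal

/-- Identification of the conditional mean potential outcome under SUTVA/consistency,
strong ignorability, and positivity: `E[Y_t | X=x] = E[Y | T=t, X=x]`, and hence the
conditional average treatment effect `τ_{t₁,t₀}(x) = E[Y_{t₁} − Y_{t₀} | X=x]` equals
`E[Y | T=t₁, X=x] − E[Y | T=t₀, X=x]`, where `Y ω = Y_{T ω} ω` is the observed outcome. -/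
theorem stmt_18 {Ω : Type*} [MeasurableSpace Ω] (P : Measure Ω) [IsProbabilityMeasure P]
    {𝒯 𝒳 : Type*} [Fintype 𝒯] [Fintype 𝒳] [MeasurableSpace 𝒯] [MeasurableSpace 𝒳]
    (T : Ω → 𝒯) (X : Ω → 𝒳) (hT : Measurable T) (hX : Measurable X)
    (Y : 𝒯 → Ω → ℝ) (hY : ∀ t, Integrable (Y t) P)
    (ignorability : ∀ x : 𝒳, P {ω | X ω = x} ≠ 0 → ∀ t₀ : 𝒯, ∀ f : (𝒯 → ℝ) → ℝ,
      Measurable f → (∃ C : ℝ, ∀ v, |f v| ≤ C) →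
      condExpE P (fun ω => f (fun t => Y t ω) * (if T ω = t₀ then 1 else 0)) {ω | X ω = x} =
        condExpE P (fun ω => f (fun t => Y t ω)) {ω | X ω = x} *
          condPrE P {ω | T ω = t₀} {ω | X ω = x})
    (positivity : ∀ (t : 𝒯) (x : 𝒳), P {ω | X ω = x} ≠ 0 →
      0 < condPrE P {ω | T ω = t} {ω | X ω = x}) :
    ∀ (x : 𝒳), P {ω | X ω = x} ≠ 0 →
      (∀ t : 𝒯, condExpE P (Y t) {ω | X ω = x} =
        condExpE P (fun ω => Y (T ω) ω) {ω | T ω = t ∧ X ω = x}) ∧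
      (∀ t₁ t₀ : 𝒯,
        condExpE P (fun ω => Y t₁ ω - Y t₀ ω) {ω | X ω = x} =
          condExpE P (fun ω => Y (T ω) ω) {ω | T ω = t₁ ∧ X ω = x} -
            condExpE P (fun ω => Y (T ω) ω) {ω | T ω = t₀ ∧ X ω = x}) := by
  intro x hx
  set A : Set Ω := {ω | X ω = x} with hA
  set μ : Measure Ω := P.restrict A with hμ
  have ha : 0 < (P A).toReal := ENNReal.toReal_pos hx (measure_ne_top P A)
  have ha' : (P A).toReal ≠ 0 := ha.ne'
  have key : ∀ t : 𝒯, condExpE P (Y t) A =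
      condExpE P (fun ω => Y (T ω) ω) {ω | T ω = t ∧ X ω = x} := by
    intro t
    set S : Set Ω := {ω | T ω = t} with hS
    have hp : 0 < condPrE P S A := positivity t x hx
    set p : ℝ := condPrE P S A with hpdef
    set g : Ω → ℝ := fun ω => if T ω = t then 1 else 0 with hg
    -- Step 1: ∫ g ∂μ = p * (P A).toReal
    have hone := ignorability x hx t (fun _ => (1:ℝ)) measurable_const
      ⟨1, fun v => by norm_num⟩
    have hcond1 : condExpE P (fun _ : Ω => (1:ℝ)) A = 1 := by
      rw [condExpE, integral_const, measureReal_restrict_apply_univ]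
      simp [Measure.real, div_self ha']
    have hIg : ∫ ω, g ω ∂μ = p * (P A).toReal := by
      simp only [one_mul] at hone
      rw [hcond1, one_mul, condExpE] at hone
      rw [div_eq_iff ha'] at hone
      exact hone
    -- Step 2: g is a.e. strongly measurable w.r.t. μ
    have hgm : AEStronglyMeasurable g μ := by
      by_contra h
      have h0 : ∫ ω, g ω ∂μ = 0 :=
        integral_undef (fun hint => h hint.aestronglyMeasurable)
      rw [hIg] at h0
      nlinarith [mul_pos hp ha]
    -- Step 3: S is null measurable w.r.t. μ
    have hSnm : NullMeasurableSet S μ := by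
      have hSg : S = g ⁻¹' {1} := by
        ext ω
        by_cases h : T ω = t <;> simp [hg, hS, h]
      rw [hSg]
      exact hgm.aemeasurable.nullMeasurable (measurableSet_singleton 1)
    set S' : Set Ω := toMeasurable μ S with hS'def
    have hS'meas : MeasurableSet S' := measurableSet_toMeasurable μ S
    have hSS' : S =ᵐ[μ] S' := hSnm.toMeasurable_ae_eq.symm
    -- Step 4: P.restrict (S ∩ A) = μ.restrict S'
    have hnull : P ((symmDiff S S') ∩ A) = 0 := by
      have h0 : μ (symmDiff S S') = 0 :=
        MeasureTheory.measure_symmDiff_eq_zero_iff.mpr hSS'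
      obtain ⟨D, hsub, hD, hD0⟩ := exists_measurable_superset_of_null h0
      rw [Measure.restrict_apply hD] at hD0
      exact measure_mono_null (Set.inter_subset_inter_left A hsub) hD0
    have haeP : (S ∩ A : Set Ω) =ᵐ[P] ((S' ∩ A : Set Ω)) := by
      rw [← MeasureTheory.measure_symmDiff_eq_zero_iff]
      refine measure_mono_null ?_ hnull
      intro ω hω
      simp only [Set.mem_symmDiff, Set.mem_inter_iff] at *
      tauto
    have hrestr : P.restrict (S ∩ A) = μ.restrict S' := by
      rw [Measure.restrict_congr_set haeP, hμ, Measure.restrict_restrict hS'meas]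
    -- Step 5: truncation and dominated convergence
    have hYμ : Integrable (Y t) μ := (hY t).restrict
    set I : ℝ := ∫ ω, Y t ω ∂μ with hI
    have hclampAll : ∀ ω : Ω, Filter.Tendsto
        (fun n : ℕ => max (-(n:ℝ)) (min (n:ℝ) (Y t ω))) Filter.atTop (nhds (Y t ω)) := by
      intro ω
      have hev : (fun n : ℕ => max (-(n:ℝ)) (min (n:ℝ) (Y t ω))) =ᶠ[Filter.atTop]
          (fun _ => Y t ω) := by
        filter_upwards [Filter.eventually_ge_atTop ⌈|Y t ω|⌉₊] with n hn
        have hn' : |Y t ω| ≤ (n:ℝ) := le_trans (Nat.le_ceil _) (Nat.cast_le.mpr hn)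
        rw [min_eq_right (le_trans (le_abs_self _) hn'),
          max_eq_right (le_trans (neg_le_neg hn') (neg_abs_le _))]
      exact Filter.Tendsto.congr' hev.symm tendsto_const_nhds
    have habs : ∀ (n : ℕ) (z : ℝ), |max (-(n:ℝ)) (min (n:ℝ) z)| ≤ |z| := by
      intro n z
      rw [abs_le]
      constructor
      · refine le_max_of_le_right (le_min ?_ (neg_abs_le z))
        linarith [Nat.cast_nonneg (α := ℝ) n, abs_nonneg z]
      · refine max_le ?_ (le_trans (min_le_right _ _) (le_abs_self z))
        linarith [Nat.cast_nonneg (α := ℝ) n, abs_nonneg z]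
    have hJ : (∫ ω, Y t ω * g ω ∂μ) = I * p := by
      set G : ℕ → Ω → ℝ := fun n ω => max (-(n:ℝ)) (min (n:ℝ) (Y t ω)) with hG
      set F : ℕ → Ω → ℝ := fun n ω => G n ω * g ω with hF
      have hGm : ∀ n, AEStronglyMeasurable (G n) μ := fun n =>
        (aemeasurable_const.max (aemeasurable_const.min hYμ.aemeasurable)).aestronglyMeasurable
      have hFm : ∀ n, AEStronglyMeasurable (F n) μ := fun n => (hGm n).mul hgm
      have hGbound : ∀ n, ∀ᵐ ω ∂μ, ‖G n ω‖ ≤ |Y t ω| := fun n =>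
        Filter.Eventually.of_forall fun ω => by
          simpa [Real.norm_eq_abs] using habs n (Y t ω)
      have hFbound : ∀ n, ∀ᵐ ω ∂μ, ‖F n ω‖ ≤ |Y t ω| := fun n =>
        Filter.Eventually.of_forall fun ω => by
          by_cases h : T ω = t
          · simpa [hF, hg, h, Real.norm_eq_abs] using habs n (Y t ω)
          · simp [hF, hg, h, Real.norm_eq_abs, abs_nonneg]
      have hGlim : ∀ᵐ ω ∂μ, Filter.Tendsto (fun n => G n ω) Filter.atTop (nhds (Y t ω)) :=
        Filter.Eventually.of_forall hclampAll
      have hFlim : ∀ᵐ ω ∂μ, Filter.Tendsto (fun n => F n ω) Filter.atTop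
          (nhds (Y t ω * g ω)) :=
        Filter.Eventually.of_forall fun ω => (hclampAll ω).mul tendsto_const_nhds
      have hDCT1 := MeasureTheory.tendsto_integral_of_dominated_convergence
        (fun ω => |Y t ω|) hFm hYμ.abs hFbound hFlim
      have hDCT2 := MeasureTheory.tendsto_integral_of_dominated_convergence
        (fun ω => |Y t ω|) hGm hYμ.abs hGbound hGlim
      have hIgn : ∀ n : ℕ, (∫ ω, F n ω ∂μ) = (∫ ω, G n ω ∂μ) * p := by
        intro n
        have hfm : Measurable (fun v : 𝒯 → ℝ => max (-(n:ℝ)) (min (n:ℝ) (v t))) :=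
          measurable_const.max (measurable_const.min (measurable_pi_apply t))
        have hfb : ∃ C : ℝ, ∀ v : 𝒯 → ℝ,
            |max (-(n:ℝ)) (min (n:ℝ) (v t))| ≤ C := by
          refine ⟨n, fun v => ?_⟩
          rw [abs_le]
          refine ⟨le_max_left _ _ |>.trans' (le_refl _), max_le ?_ (min_le_left _ _)⟩
          · linarith [Nat.cast_nonneg (α := ℝ) n]
        have hig := ignorability x hx t _ hfm hfb
        rw [condExpE, condExpE] at hig
        rw [div_mul_eq_mul_div, div_eq_div_iff ha' ha'] at hig
        have hig' := mul_right_cancel₀ ha' hig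
        simpa [hF, hG, hg] using hig'
      have hto : Filter.Tendsto (fun n => ∫ ω, F n ω ∂μ) Filter.atTop (nhds (I * p)) := by
        simp only [hIgn]
        exact hDCT2.mul_const p
      exact tendsto_nhds_unique hDCT1 hto
    -- Step 6: identify the restricted integral
    have hBint : ∫ ω, Y (T ω) ω ∂(P.restrict (S ∩ A)) = I * p := by
      rw [hrestr, ← integral_indicator hS'meas, ← hJ]
      apply integral_congr_ae
      filter_upwards [Filter.eventuallyEq_set.mp hSS'] with ω hω
      by_cases hωS : ω ∈ S'
      · have hmem : T ω = t := hω.mpr hωS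
        simp [Set.indicator_of_mem hωS, hmem, hg]
      · have hmem : T ω ≠ t := fun h => hωS (hω.mp h)
        simp [Set.indicator_of_notMem hωS, hmem, hg]
    -- Step 7: assemble
    have hBset : {ω | T ω = t ∧ X ω = x} = S ∩ A := by
      ext ω; simp [hS, hA, Set.mem_inter_iff, Set.mem_setOf_eq]
    have hPB : (P (S ∩ A)).toReal = p * (P A).toReal := by
      rw [hpdef, condPrE, div_mul_cancel₀ _ ha']
    rw [condExpE, condExpE, hBset]
    have h1 : ∫ ω in S ∩ A, Y (T ω) ω ∂P = I * p := hBint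
    have h2 : ∫ ω in A, Y t ω ∂P = I := rfl
    rw [h1, h2, hPB]
    rw [mul_comm p (P A).toReal, mul_div_mul_right I _ hp.ne']
  refine ⟨key, fun t₁ t₀ => ?_⟩
  rw [← key t₁, ← key t₀, condExpE, condExpE, condExpE]
  rw [integral_sub ((hY t₁).restrict) ((hY t₀).restrict), sub_div]
end
end
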